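/- arXiv:2303.17535 — 2 statements merged into one kernel-verified Lean document; each statement's English description precedes it below -/
import Mathlib

section
/- Let k ≥ 1 and n ≥ k+1 be integers and t ∈ [0,1]. In the random clique complex model, let N̂_k(t) be the number of (k+1)-element subsets σ of [n] such that σ is not a clique of G(n,t) but σ is a maximal clique of G(n,s) for some s ∈ (t,1]. Then E[N̂_k(t)] ≤ C(n,k+1) · C(k+1,2) · ∫_t^1 s^{C(k+1,2) − 1} (1 − s^{k+1})^{n−k−1} ds, where C(a,b) denotes the binomial coefficient a choose b. -/
open MeasureTheory

/-- Index type: unordered pairs of distinct elements of `Fin n`. -/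
abbrev EdgeIdx (n : ℕ) := {e : Sym2 (Fin n) // ¬ e.IsDiag}

noncomputable instance (n : ℕ) : Fintype (EdgeIdx n) := Fintype.ofFinite _

/-- Uniform probability measure on `[0,1]`. -/
noncomputable def unif : Measure ℝ := volume.restrict (Set.Icc 0 1)

/-- The product measure: i.i.d. Uniform[0,1] edge weights. -/
noncomputable def Pn (n : ℕ) : Measure (EdgeIdx n → ℝ) := Measure.pi fun _ => unif

/-- The weight of the pair `{i,j}` (defined to be `0` if `i = j`, a junk value never used). -/
noncomputable def eV {n : ℕ} (ω : EdgeIdx n → ℝ) (i j : Fin n) : ℝ :=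
  if h : i = j then 0 else ω ⟨s(i, j), by simp [Sym2.mk_isDiag_iff, h]⟩

/-- `σ` is a clique of `G(n,t)`: every pair of distinct elements of `σ` is an edge. -/
def IsClique {n : ℕ} (ω : EdgeIdx n → ℝ) (t : ℝ) (σ : Finset (Fin n)) : Prop :=
  ∀ i ∈ σ, ∀ j ∈ σ, i ≠ j → eV ω i j ≤ t

/-- `σ` is a maximal `(k+1)`-element clique of `G(n,t)`. -/
def IsMaxClique {n : ℕ} (k : ℕ) (ω : EdgeIdx n → ℝ) (t : ℝ) (σ : Finset (Fin n)) : Prop :=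
  σ.card = k + 1 ∧ IsClique ω t σ ∧ ∀ p, p ∉ σ → ∃ i ∈ σ, t < eV ω p i

/-- `N_k(t)`: the number of maximal `(k+1)`-element cliques of `G(n,t)`. -/
noncomputable def Nk {n : ℕ} (k : ℕ) (t : ℝ) (ω : EdgeIdx n → ℝ) : ℕ :=
  Nat.card {σ : Finset (Fin n) // IsMaxClique k ω t σ}

/-- `N*_k(t)`: the number of `(k+1)`-element subsets that are maximal cliques
of `G(n,s)` for some `s ∈ [t,1]`. -/
noncomputable def NkStar {n : ℕ} (k : ℕ) (t : ℝ) (ω : EdgeIdx n → ℝ) : ℕ :=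
  Nat.card {σ : Finset (Fin n) // ∃ s, t ≤ s ∧ s ≤ 1 ∧ IsMaxClique k ω s σ}

/-- The critical window time `t_c(k,n)`. -/
noncomputable def tc (k : ℕ) (c : ℝ) (n : ℕ) : ℝ :=
  ((((k : ℝ) / 2 + 1) * Real.log n + ((k : ℝ) / 2) * Real.log (Real.log n) + c) / n)
    ^ ((1 : ℝ) / (k + 1))

/-- `μ(k,c) = ((k/2+1)^(k/2)/(k+1)!) e^{-c}`. -/
noncomputable def muk (k : ℕ) (c : ℝ) : ℝ :=
  (((k : ℝ) / 2 + 1) ^ ((k : ℝ) / 2) / (Nat.factorial (k + 1))) * Real.exp (-c)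

/-- `N̂_k(t)`: the number of `(k+1)`-element subsets that are not cliques of `G(n,t)`
but are maximal cliques of `G(n,s)` for some `s ∈ (t,1]`. -/
noncomputable def NkHat {n : ℕ} (k : ℕ) (t : ℝ) (ω : EdgeIdx n → ℝ) : ℕ :=
  Nat.card {σ : Finset (Fin n) // σ.card = k + 1 ∧ ¬ IsClique ω t σ ∧
    ∃ s, t < s ∧ s ≤ 1 ∧ IsMaxClique k ω s σ}

/-!
A `(k+1)`-set `σ` counted by `N̂_k(t)` becomes a clique at the weight `s = ω e` of its heaviest
edge `e`, and it is then maximal iff every vertex `p ∉ σ` still has an edge to `σ` heavier than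
`s`. Given `ω e = s`, the other `C(k+1,2) - 1` edges of `σ` lie below `s` with probability
`s ^ (C(k+1,2) - 1)`, and the `n - k - 1` disjoint stars joining an outside vertex to `σ` each
contain an edge above `s` with probability `1 - s ^ (k+1)`, independently. Integrating over
`s ∈ (t, 1]` and taking a union bound over the `C(k+1,2)` choices of `e` and the `C(n,k+1)`
choices of `σ` gives the bound.
-/

open Set ProbabilityTheory

instance : IsProbabilityMeasure unif :=
  ⟨by simp [unif, Real.volume_Icc]⟩

instance (n : ℕ) : IsProbabilityMeasure (Pn n) := by
  unfold Pn
  infer_instance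

theorem unif_Iic {s : ℝ} (hs : s ≤ 1) : unif (Iic s) = ENNReal.ofReal s := by
  have : Iic s ∩ Icc 0 1 = Icc 0 s := by
    ext x
    simp only [mem_inter_iff, Set.mem_Iic, Set.mem_Icc]
    exact ⟨fun h => ⟨h.2.1, h.1⟩, fun h => ⟨h.2, h.1, h.2.trans hs⟩⟩
  rw [unif, Measure.restrict_apply measurableSet_Iic, this, Real.volume_Icc, sub_zero]

theorem integral_natCard_eq_sum_measureReal {α Ω : Type*} [Fintype α] [MeasurableSpace Ω]
    (μ : Measure Ω) [IsFiniteMeasure μ] {A : α → Set Ω} (hA : ∀ a, MeasurableSet (A a)) :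
    ∫ ω, (Nat.card {a // ω ∈ A a} : ℝ) ∂μ = ∑ a, μ.real (A a) := by
  classical
  have h : ∀ ω, (Nat.card {a // ω ∈ A a} : ℝ) = ∑ a, (A a).indicator 1 ω := by
    intro ω
    rw [Nat.card_eq_fintype_card, Fintype.card_subtype, Finset.card_filter]
    push_cast
    simp only [Set.indicator_apply, Pi.one_apply]
  simp_rw [h]
  rw [integral_finsetSum _ fun a _ => (integrable_const 1).indicator (hA a)]
  exact Finset.sum_congr rfl fun a _ => integral_indicator_one (hA a)

section Product

variable {ι β : Type*}

theorem indep_cylinderEvents_pi [Fintype ι] {X : ι → Type*} [∀ i, MeasurableSpace (X i)]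
    (μ : ∀ i, Measure (X i)) [∀ i, IsProbabilityMeasure (μ i)] {S T : Set ι}
    (hST : Disjoint S T) :
    Indep (cylinderEvents S) (cylinderEvents T) (Measure.pi μ) :=
  indep_iSup_of_disjoint (fun i => (measurable_pi_apply i).comap_le)
    (iIndepFun_pi (X := fun _ => id) fun _ => aemeasurable_id) hST

theorem measurableSet_cylinderEvents_setOf_forall_le (S : Finset ι) (s : ℝ) :
    MeasurableSet[cylinderEvents (S : Set ι)] {ω : ι → ℝ | ∀ i ∈ S, ω i ≤ s} := by
  simp only [ofPred_forall]
  exact MeasurableSet.biInter S.countable_toSet fun i hi =>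
    measurableSet_le (measurable_cylinderEvent_apply hi) measurable_const

theorem pi_unif_setOf_forall_le [Fintype ι] (S : Finset ι) {s : ℝ} (hs0 : 0 ≤ s) (hs1 : s ≤ 1) :
    Measure.pi (fun _ : ι => unif) {ω | ∀ i ∈ S, ω i ≤ s} = ENNReal.ofReal (s ^ S.card) := by
  have h := (iIndepFun_pi (μ := fun _ : ι => unif) (X := fun _ => id)
    fun _ => aemeasurable_id).measure_inter_preimage_eq_mul S (sets := fun _ => Iic s)
    fun _ _ => measurableSet_Iic
  rw [ENNReal.ofReal_pow hs0, ← unif_Iic hs1, ← Finset.prod_const]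
  convert h using 2
  · ext ω; simp
  · exact ((measurePreserving_eval (fun _ : ι => unif) _).measure_preimage
      measurableSet_Iic.nullMeasurableSet).symm

def boxEscapeSet (S : Finset ι) (T : β → Finset ι) (Q : Finset β) (s : ℝ) : Set (ι → ℝ) :=
  {ω | (∀ i ∈ S, ω i ≤ s) ∧ ∀ p ∈ Q, ∃ i ∈ T p, s < ω i}

theorem boxEscapeSet_eq_inter (S : Finset ι) (T : β → Finset ι) (Q : Finset β) (s : ℝ) :
    boxEscapeSet S T Q s =
      {ω | ∀ i ∈ S, ω i ≤ s} ∩ ⋂ p ∈ Q, {ω | ∀ i ∈ T p, ω i ≤ s}ᶜ := by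
  ext ω
  simp [boxEscapeSet]

theorem measurableSet_cylinderEvents_boxEscapeSet [DecidableEq ι] (S : Finset ι)
    (T : β → Finset ι) (Q : Finset β) (s : ℝ) :
    MeasurableSet[cylinderEvents ↑(S ∪ Q.biUnion T)] (boxEscapeSet S T Q s) := by
  rw [boxEscapeSet_eq_inter]
  refine MeasurableSet.inter ?_ (MeasurableSet.biInter Q.countable_toSet fun p hp => ?_)
  · exact cylinderEvents_mono (by simp) _ (measurableSet_cylinderEvents_setOf_forall_le S s)
  · refine cylinderEvents_mono ?_ _ (measurableSet_cylinderEvents_setOf_forall_le _ s).compl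
    exact Finset.coe_subset.2 ((Finset.subset_biUnion_of_mem T hp).trans Finset.subset_union_right)

theorem pi_unif_boxEscapeSet [Fintype ι] (S : Finset ι) (T : β → Finset ι) (Q : Finset β)
    (hST : ∀ p ∈ Q, Disjoint S (T p)) (hT : (Q : Set β).PairwiseDisjoint T)
    {s : ℝ} (hs0 : 0 ≤ s) (hs1 : s ≤ 1) :
    Measure.pi (fun _ : ι => unif) (boxEscapeSet S T Q s) =
      ENNReal.ofReal (s ^ S.card * ∏ p ∈ Q, (1 - s ^ (T p).card)) := by
  classical
  induction Q using Finset.induction_on with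
  | empty => simpa [boxEscapeSet] using pi_unif_setOf_forall_le S hs0 hs1
  | insert a Q ha ih =>
    have hsplit : boxEscapeSet S T (insert a Q) s =
        {ω | ∀ i ∈ T a, ω i ≤ s}ᶜ ∩ boxEscapeSet S T Q s := by
      simp only [boxEscapeSet_eq_inter, Finset.set_biInter_insert]
      ac_rfl
    have hdisj : Disjoint (T a : Set ι) ↑(S ∪ Q.biUnion T) := by
      rw [Finset.disjoint_coe, Finset.disjoint_union_right, Finset.disjoint_biUnion_right]
      exact ⟨(hST a (Finset.mem_insert_self a Q)).symm, fun p hp =>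
        hT (by simp) (by simp [hp]) (ne_of_mem_of_not_mem hp ha).symm⟩
    have hbox := measurableSet_cylinderEvents_setOf_forall_le (T a) s
    rw [hsplit, (Indep_iff _ _ _).1 (indep_cylinderEvents_pi _ hdisj) _ _ hbox.compl
      (measurableSet_cylinderEvents_boxEscapeSet S T Q s),
      prob_compl_eq_one_sub (cylinderEvents_le_pi _ hbox), pi_unif_setOf_forall_le _ hs0 hs1,
      ih (fun p hp => hST p (Finset.mem_insert_of_mem hp)) (hT.subset (by simp)),
      Finset.prod_insert ha,
      ← ENNReal.ofReal_one, ← ENNReal.ofReal_sub _ (by positivity),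
      ← ENNReal.ofReal_mul (sub_nonneg.2 (pow_le_one₀ hs0 hs1))]
    ring_nf

theorem pi_setOf_apply_mem_eq_lintegral [Fintype ι] {X : Type*} [MeasurableSpace X] [Nonempty X]
    (μ : ι → Measure X) [∀ i, IsProbabilityMeasure (μ i)] (e : ι) {S : Set (X × (ι → X))}
    (hS : MeasurableSet S) (hSe : ∀ x, DependsOn (fun ω => (x, ω) ∈ S) {e}ᶜ) :
    Measure.pi μ {ω | (ω e, ω) ∈ S} = ∫⁻ x, Measure.pi μ {ω | (x, ω) ∈ S} ∂μ e := by
  classical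
  obtain ⟨x₀⟩ := ‹Nonempty X›
  -- `ω e` is independent of `Y ω`, and the slices of `S` cannot tell `Y ω` from `ω`.
  set Y : (ι → X) → (ι → X) := fun ω => Function.update ω e x₀
  have hY : Measurable[cylinderEvents {e}ᶜ] Y := by
    refine @measurable_pi_lambda _ _ _ (cylinderEvents {e}ᶜ) _ Y fun i => ?_
    by_cases hi : i = e
    · subst hi
      simp only [Y, Function.update_self]
      exact measurable_const
    · simp only [Y, Function.update_of_ne hi]
      exact measurable_cylinderEvent_apply (Set.mem_compl_singleton_iff.2 hi)
  have hSY : ∀ x ω, (x, Y ω) ∈ S ↔ (x, ω) ∈ S := fun x ω =>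
    Iff.of_eq (hSe x fun i hi => Function.update_of_ne (Set.mem_compl_singleton_iff.1 hi) _ _)
  have hind : IndepFun (fun ω => ω e) Y (Measure.pi μ) := by
    have h := indep_cylinderEvents_pi μ (S := {e}) (T := {e}ᶜ) disjoint_compl_right
    have he : Measurable[cylinderEvents {e}] fun ω : ι → X => ω e :=
      measurable_cylinderEvent_apply (mem_singleton e)
    rw [IndepFun_iff_Indep]
    exact indep_of_indep_of_le_right (indep_of_indep_of_le_left h he.comap_le) hY.comap_le
  have hYm : Measurable Y := hY.mono cylinderEvents_le_pi le_rfl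
  have hlaw : (Measure.pi μ).map (fun ω => (ω e, Y ω)) = (μ e).prod ((Measure.pi μ).map Y) := by
    rw [(indepFun_iff_map_prod_eq_prod_map_map (measurable_pi_apply e).aemeasurable
      hYm.aemeasurable).1 hind, (measurePreserving_eval μ e).map_eq]
  calc Measure.pi μ {ω | (ω e, ω) ∈ S}
      = Measure.pi μ ((fun ω => (ω e, Y ω)) ⁻¹' S) := by simp only [preimage, hSY]
    _ = ((μ e).prod ((Measure.pi μ).map Y)) S := by
      rw [← hlaw, Measure.map_apply ((measurable_pi_apply e).prodMk hYm) hS]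
    _ = ∫⁻ x, Measure.pi μ {ω | (x, ω) ∈ S} ∂μ e := by
      rw [Measure.prod_apply hS]
      refine lintegral_congr fun x => ?_
      rw [Measure.map_apply hYm (measurable_prodMk_left hS)]
      simp only [preimage, mem_ofPred_eq, hSY]

theorem measurableSet_setOf_mem_boxEscapeSet [Countable ι] (S : Finset ι) (T : β → Finset ι)
    (Q : Finset β) : MeasurableSet {x : ℝ × (ι → ℝ) | x.2 ∈ boxEscapeSet S T Q x.1} := by
  have h : {x : ℝ × (ι → ℝ) | x.2 ∈ boxEscapeSet S T Q x.1} =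
      (⋂ i ∈ S, {x | x.2 i ≤ x.1}) ∩ ⋂ p ∈ Q, ⋃ i ∈ T p, {x | x.1 < x.2 i} := by
    ext x
    simp [boxEscapeSet]
  rw [h]
  exact .inter (.biInter S.countable_toSet fun i _ => measurableSet_le (by fun_prop) (by fun_prop))
    (.biInter Q.countable_toSet fun p _ => .biUnion (T p).countable_toSet fun i _ =>
      measurableSet_lt (by fun_prop) (by fun_prop))

def peakSet (e : ι) (S : Finset ι) (T : β → Finset ι) (Q : Finset β) (t : ℝ) : Set (ι → ℝ) :=
  {ω | ω e ∈ Ioc t 1 ∧ ω ∈ boxEscapeSet S T Q (ω e)}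

theorem measurableSet_peakSet [Countable ι] (e : ι) (S : Finset ι) (T : β → Finset ι)
    (Q : Finset β) (t : ℝ) : MeasurableSet (peakSet e S T Q t) := by
  have h : MeasurableSet {x : ℝ × (ι → ℝ) | x.1 ∈ Ioc t 1 ∧ x.2 ∈ boxEscapeSet S T Q x.1} :=
    (measurable_fst measurableSet_Ioc).inter (measurableSet_setOf_mem_boxEscapeSet S T Q)
  exact h.preimage (f := fun ω : ι → ℝ => (ω e, ω)) (by fun_prop)

theorem boxEscapeSet_dependsOn [DecidableEq ι] (S : Finset ι) (T : β → Finset ι) (Q : Finset β)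
    (s : ℝ) : DependsOn (· ∈ boxEscapeSet S T Q s) ↑(S ∪ Q.biUnion T) := by
  intro ω ω' h
  have hS : ∀ i ∈ S, ω i = ω' i := fun i hi => h i (by simp [hi])
  have hT : ∀ p ∈ Q, ∀ i ∈ T p, ω i = ω' i := fun p hp i hi =>
    h i (Finset.mem_union_right _ (Finset.mem_biUnion.2 ⟨p, hp, hi⟩))
  exact propext (and_congr (forall₂_congr fun i hi => by rw [hS i hi])
    (forall₂_congr fun p hp => exists_congr fun i => and_congr_right fun hi => by
      rw [hT p hp i hi]))

theorem pi_unif_peakSet_eq_lintegral [Fintype ι] (e : ι) (S : Finset ι) (T : β → Finset ι)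
    (Q : Finset β) (he : e ∉ S) (heT : ∀ p ∈ Q, e ∉ T p) (t : ℝ) :
    Measure.pi (fun _ : ι => unif) (peakSet e S T Q t) =
      ∫⁻ s in Ioc t 1, Measure.pi (fun _ : ι => unif) (boxEscapeSet S T Q s) ∂unif := by
  classical
  set A := {x : ℝ × (ι → ℝ) | x.1 ∈ Ioc t 1 ∧ x.2 ∈ boxEscapeSet S T Q x.1}
  have hA : MeasurableSet A :=
    (measurable_fst measurableSet_Ioc).inter (measurableSet_setOf_mem_boxEscapeSet S T Q)
  have hsub : ↑(S ∪ Q.biUnion T) ⊆ ({e}ᶜ : Set ι) := by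
    rintro i hi rfl
    simp only [Finset.coe_union, Finset.coe_biUnion, mem_union, Finset.mem_coe, mem_iUnion,
      exists_prop] at hi
    rcases hi with hi | ⟨p, hp, hi⟩
    exacts [he hi, heT p hp hi]
  have hAe : ∀ x, DependsOn (fun ω => (x, ω) ∈ A) {e}ᶜ := fun x _ _ h =>
    congrArg (x ∈ Ioc t 1 ∧ ·) ((boxEscapeSet_dependsOn S T Q x).mono hsub h)
  change Measure.pi _ {ω : ι → ℝ | (ω e, ω) ∈ A} = _
  rw [pi_setOf_apply_mem_eq_lintegral _ e hA hAe, ← lintegral_indicator measurableSet_Ioc]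
  refine lintegral_congr fun x => ?_
  by_cases hx : x ∈ Ioc t 1
  · rw [indicator_of_mem hx]
    exact congrArg _ (Set.ext fun ω => and_iff_right hx)
  · rw [indicator_of_notMem hx, ← measure_empty (μ := Measure.pi fun _ : ι => unif)]
    exact congrArg _ (Set.eq_empty_of_forall_notMem fun ω hω => hx hω.1)

theorem pi_unif_peakSet [Fintype ι] (e : ι) (S : Finset ι) (T : β → Finset ι)
    (Q : Finset β) (he : e ∉ S) (heT : ∀ p ∈ Q, e ∉ T p) (hST : ∀ p ∈ Q, Disjoint S (T p))
    (hT : (Q : Set β).PairwiseDisjoint T) {t : ℝ} (ht0 : 0 ≤ t) (ht1 : t ≤ 1) :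
    Measure.pi (fun _ : ι => unif) (peakSet e S T Q t) =
      ENNReal.ofReal (∫ s in t..1, s ^ S.card * ∏ p ∈ Q, (1 - s ^ (T p).card)) := by
  have hg : ∀ s ∈ Ioc t 1, 0 ≤ s ^ S.card * ∏ p ∈ Q, (1 - s ^ (T p).card) := fun s hs =>
    have hs0 : 0 ≤ s := ht0.trans hs.1.le
    mul_nonneg (pow_nonneg hs0 _)
      (Finset.prod_nonneg fun p _ => sub_nonneg.2 (pow_le_one₀ hs0 hs.2))
  have hunif : unif.restrict (Ioc t 1) = volume.restrict (Ioc t 1) := by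
    rw [unif, Measure.restrict_restrict measurableSet_Ioc,
      inter_eq_left.2 (Ioc_subset_Icc_self.trans (Icc_subset_Icc_left ht0))]
  rw [pi_unif_peakSet_eq_lintegral e S T Q he heT, setLIntegral_congr_fun measurableSet_Ioc
      fun s hs => pi_unif_boxEscapeSet S T Q hST hT (ht0.trans hs.1.le) hs.2,
    hunif, intervalIntegral.integral_of_le ht1, ofReal_integral_eq_lintegral_ofReal
      (Continuous.integrableOn_Ioc (by fun_prop))
      ((ae_restrict_iff' measurableSet_Ioc).2 (.of_forall hg))]

end Product

section Graph

variable {n : ℕ}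

def edge (i j : Fin n) (h : i ≠ j) : EdgeIdx n :=
  ⟨s(i, j), Sym2.mk_isDiag_iff.not.2 h⟩

theorem eV_of_ne (ω : EdgeIdx n → ℝ) {i j : Fin n} (h : i ≠ j) : eV ω i j = ω (edge i j h) :=
  dif_neg h

theorem exists_eq_edge (E : EdgeIdx n) : ∃ i j, ∃ h : i ≠ j, E = edge i j h := by
  obtain ⟨z, hz⟩ := E
  induction z using Sym2.ind with
  | h i j => exact ⟨i, j, Sym2.mk_isDiag_iff.not.1 hz, rfl⟩

def edgesIn (σ : Finset (Fin n)) : Finset (EdgeIdx n) :=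
  σ.sym2.subtype (¬ ·.IsDiag)

theorem mem_edgesIn {σ : Finset (Fin n)} {E : EdgeIdx n} : E ∈ edgesIn σ ↔ ∀ v ∈ E.1, v ∈ σ := by
  rw [edgesIn, Finset.mem_subtype, Finset.mem_sym2_iff]

theorem edge_mem_edgesIn {σ : Finset (Fin n)} {i j : Fin n} (h : i ≠ j) :
    edge i j h ∈ edgesIn σ ↔ i ∈ σ ∧ j ∈ σ := by
  simp [mem_edgesIn, edge]

theorem card_edgesIn (σ : Finset (Fin n)) : (edgesIn σ).card = σ.card.choose 2 := by
  rw [edgesIn, Finset.card_subtype, Finset.sym2_eq_image, Sym2.filter_image_mk_not_isDiag,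
    Sym2.card_image_offDiag]

theorem isClique_iff_forall_edgesIn {ω : EdgeIdx n → ℝ} {c : ℝ} {σ : Finset (Fin n)} :
    IsClique ω c σ ↔ ∀ E ∈ edgesIn σ, ω E ≤ c := by
  constructor
  · intro h E hE
    obtain ⟨i, j, hij, rfl⟩ := exists_eq_edge E
    obtain ⟨hi, hj⟩ := (edge_mem_edgesIn hij).1 hE
    exact eV_of_ne ω hij ▸ h i hi j hj hij
  · intro h i hi j hj hij
    exact (eV_of_ne ω hij).symm ▸ h _ ((edge_mem_edgesIn hij).2 ⟨hi, hj⟩)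

def edgesTo (σ : Finset (Fin n)) (p : Fin n) : Finset (EdgeIdx n) :=
  (σ.image fun i => s(p, i)).subtype (¬ ·.IsDiag)

theorem mem_edgesTo {σ : Finset (Fin n)} {p : Fin n} {E : EdgeIdx n} :
    E ∈ edgesTo σ p ↔ ∃ i ∈ σ, s(p, i) = E.1 := by
  rw [edgesTo, Finset.mem_subtype, Finset.mem_image]

theorem card_edgesTo {σ : Finset (Fin n)} {p : Fin n} (hp : p ∉ σ) :
    (edgesTo σ p).card = σ.card := by
  rw [edgesTo, Finset.card_subtype, Finset.filter_true_of_mem, Finset.card_image_of_injective]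
  · exact fun i j h => Sym2.congr_right.1 h
  · simp only [Finset.mem_image, forall_exists_index, and_imp]
    rintro _ i hi rfl
    exact Sym2.mk_isDiag_iff.not.2 (ne_of_mem_of_not_mem hi hp).symm

theorem exists_lt_eV_iff {ω : EdgeIdx n → ℝ} {c : ℝ} {σ : Finset (Fin n)} {p : Fin n}
    (hp : p ∉ σ) : (∃ i ∈ σ, c < eV ω p i) ↔ ∃ E ∈ edgesTo σ p, c < ω E := by
  constructor
  · rintro ⟨i, hi, hlt⟩
    have hpi : p ≠ i := (ne_of_mem_of_not_mem hi hp).symm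
    exact ⟨edge p i hpi, mem_edgesTo.2 ⟨i, hi, rfl⟩, eV_of_ne ω hpi ▸ hlt⟩
  · rintro ⟨E, hE, hlt⟩
    obtain ⟨i, hi, hE⟩ := mem_edgesTo.1 hE
    have hpi : p ≠ i := (ne_of_mem_of_not_mem hi hp).symm
    obtain rfl : edge p i hpi = E := Subtype.ext hE
    exact ⟨i, hi, (eV_of_ne ω hpi).symm ▸ hlt⟩

theorem disjoint_edgesIn_edgesTo {σ : Finset (Fin n)} {p : Fin n} (hp : p ∉ σ) :
    Disjoint (edgesIn σ) (edgesTo σ p) := by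
  refine Finset.disjoint_left.2 fun E hin hto => hp ?_
  obtain ⟨i, -, hE⟩ := mem_edgesTo.1 hto
  exact mem_edgesIn.1 hin p (hE ▸ Sym2.mem_mk_left p i)

theorem pairwiseDisjoint_edgesTo (σ : Finset (Fin n)) :
    ((σᶜ : Finset (Fin n)) : Set (Fin n)).PairwiseDisjoint (edgesTo σ) := by
  intro p hp q _ hpq
  refine Finset.disjoint_left.2 fun E hEp hEq => ?_
  obtain ⟨i, -, hi⟩ := mem_edgesTo.1 hEp
  obtain ⟨j, hj, hj'⟩ := mem_edgesTo.1 hEq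
  rcases Sym2.eq_iff.1 (hi.trans hj'.symm) with ⟨h, -⟩ | ⟨rfl, -⟩
  · exact hpq h
  · exact (Finset.mem_compl.1 hp) hj

end Graph

section Expectation

variable {n : ℕ}

def nkHatEvent (k : ℕ) (t : ℝ) (σ : Finset (Fin n)) : Set (EdgeIdx n → ℝ) :=
  {ω | σ.card = k + 1 ∧ ¬ IsClique ω t σ ∧ ∃ s, t < s ∧ s ≤ 1 ∧ IsMaxClique k ω s σ}

theorem nkHatEvent_eq_biUnion {k : ℕ} {t : ℝ} {σ : Finset (Fin n)} (hσ : σ.card = k + 1) :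
    nkHatEvent k t σ =
      ⋃ e ∈ edgesIn σ, peakSet e ((edgesIn σ).erase e) (edgesTo σ) σᶜ t := by
  ext ω
  simp only [nkHatEvent, IsMaxClique, isClique_iff_forall_edgesIn, peakSet, boxEscapeSet,
    mem_ofPred_eq, mem_iUnion, exists_prop, mem_Ioc, Finset.mem_compl]
  constructor
  · rintro ⟨-, hnc, s, hts, hs1, -, hcl, hmax⟩
    push Not at hnc
    obtain ⟨E, hE, htE⟩ := hnc
    obtain ⟨e, he, hmaxe⟩ := Finset.exists_max_image (edgesIn σ) ω ⟨E, hE⟩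
    refine ⟨e, he, ⟨htE.trans_le (hmaxe E hE), (hcl e he).trans hs1⟩,
      fun E hE => hmaxe E (Finset.mem_of_mem_erase hE), fun p hp => ?_⟩
    obtain ⟨E', hE', hlt⟩ := (exists_lt_eV_iff hp).1 (hmax p hp)
    exact ⟨E', hE', (hcl e he).trans_lt hlt⟩
  · rintro ⟨e, he, ⟨hte, he1⟩, hbelow, hesc⟩
    refine ⟨hσ, fun hcl => (hcl e he).not_gt hte, ω e, hte, he1, hσ, fun E hE => ?_,
      fun p hp => (exists_lt_eV_iff hp).2 (hesc p hp)⟩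
    rcases eq_or_ne E e with rfl | hne
    · exact le_rfl
    · exact hbelow E (Finset.mem_erase.2 ⟨hne, hE⟩)

theorem nkHatEvent_of_card_ne {k : ℕ} {t : ℝ} {σ : Finset (Fin n)} (hσ : σ.card ≠ k + 1) :
    nkHatEvent k t σ = ∅ :=
  eq_empty_of_forall_notMem fun _ hω => hσ hω.1

theorem measurableSet_nkHatEvent (k : ℕ) (t : ℝ) (σ : Finset (Fin n)) :
    MeasurableSet (nkHatEvent k t σ) := by
  by_cases hσ : σ.card = k + 1
  · rw [nkHatEvent_eq_biUnion hσ]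
    exact Finset.measurableSet_biUnion _ fun e _ => measurableSet_peakSet _ _ _ _ _
  · rw [nkHatEvent_of_card_ne hσ]
    exact MeasurableSet.empty

theorem measureReal_nkHatEvent_le {k : ℕ} {t : ℝ} (ht0 : 0 ≤ t) (ht1 : t ≤ 1)
    {σ : Finset (Fin n)} (hσ : σ.card = k + 1) :
    (Pn n).real (nkHatEvent k t σ) ≤ (k + 1).choose 2 *
      ∫ s in t..1, s ^ ((k + 1).choose 2 - 1) * (1 - s ^ (k + 1)) ^ (n - k - 1) := by
  have hpeak : ∀ e ∈ edgesIn σ, Pn n (peakSet e ((edgesIn σ).erase e) (edgesTo σ) σᶜ t) =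
      ENNReal.ofReal
        (∫ s in t..1, s ^ ((k + 1).choose 2 - 1) * (1 - s ^ (k + 1)) ^ (n - k - 1)) := by
    intro e he
    have hdisj : ∀ p ∈ σᶜ, Disjoint (edgesIn σ) (edgesTo σ p) := fun p hp =>
      disjoint_edgesIn_edgesTo (Finset.mem_compl.1 hp)
    rw [Pn, pi_unif_peakSet e _ _ _ (Finset.notMem_erase e _)
      (fun p hp => Finset.disjoint_left.1 (hdisj p hp) he)
      (fun p hp => (hdisj p hp).mono_left (Finset.erase_subset e _))
      (pairwiseDisjoint_edgesTo σ) ht0 ht1, Finset.card_erase_of_mem he, card_edgesIn, hσ]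
    refine congrArg ENNReal.ofReal (intervalIntegral.integral_congr fun s _ => ?_)
    rw [Finset.prod_eq_pow_card fun p hp => by rw [card_edgesTo (Finset.mem_compl.1 hp), hσ],
      Finset.card_compl, Fintype.card_fin, hσ, Nat.sub_add_eq]
  have hI : 0 ≤ ∫ s in t..1, s ^ ((k + 1).choose 2 - 1) * (1 - s ^ (k + 1)) ^ (n - k - 1) :=
    intervalIntegral.integral_nonneg ht1 fun s hs =>
      mul_nonneg (pow_nonneg (ht0.trans hs.1) _)
        (pow_nonneg (sub_nonneg.2 (pow_le_one₀ (ht0.trans hs.1) hs.2)) _)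
  refine ENNReal.toReal_le_of_le_ofReal (by positivity) ?_
  rw [nkHatEvent_eq_biUnion hσ, ENNReal.ofReal_mul (by positivity), ENNReal.ofReal_natCast]
  refine (measure_biUnion_finset_le _ _).trans ?_
  rw [Finset.sum_congr rfl hpeak, Finset.sum_const, card_edgesIn, hσ, nsmul_eq_mul]

end Expectation

theorem expectation_NkHat_le_general (k n : ℕ)
    (t : ℝ) (ht : t ∈ Set.Icc (0 : ℝ) 1) :
    (∫ ω, (NkHat k t ω : ℝ) ∂ Pn n) ≤
      (Nat.choose n (k + 1)) * (Nat.choose (k + 1) 2) *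
        ∫ s in t..1, s ^ (Nat.choose (k + 1) 2 - 1) * (1 - s ^ (k + 1)) ^ (n - k - 1) := by
  set I := ∫ s in t..1, s ^ (Nat.choose (k + 1) 2 - 1) * (1 - s ^ (k + 1)) ^ (n - k - 1)
  calc (∫ ω, (NkHat k t ω : ℝ) ∂ Pn n)
      = ∑ σ : Finset (Fin n), (Pn n).real (nkHatEvent k t σ) :=
        integral_natCard_eq_sum_measureReal _ (measurableSet_nkHatEvent k t)
    _ ≤ ∑ σ : Finset (Fin n), if σ.card = k + 1 then (k + 1).choose 2 * I else 0 := by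
        refine Finset.sum_le_sum fun σ _ => ?_
        split_ifs with hσ
        · exact measureReal_nkHatEvent_le ht.1 ht.2 hσ
        · rw [nkHatEvent_of_card_ne hσ, measureReal_empty]
    _ = _ := by
        rw [Finset.sum_ite, Finset.sum_const_zero, add_zero, Finset.sum_const, nsmul_eq_mul,
          ← Fintype.card_subtype, Fintype.card_finset_len, Fintype.card_fin, mul_assoc]

/-- `E[N̂_k(t)] ≤ C(n,k+1)·C(k+1,2)·∫_t^1 s^(C(k+1,2)−1)(1−s^{k+1})^{n−k−1} ds`. -/
theorem expectation_NkHat_le (k n : ℕ) (hk : 1 ≤ k) (hn : k + 1 ≤ n)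
    (t : ℝ) (ht : t ∈ Set.Icc (0 : ℝ) 1) :
    (∫ ω, (NkHat k t ω : ℝ) ∂ Pn n) ≤
      (Nat.choose n (k + 1)) * (Nat.choose (k + 1) 2) *
        ∫ s in t..1, s ^ (Nat.choose (k + 1) 2 - 1) * (1 - s ^ (k + 1)) ^ (n - k - 1) :=
  expectation_NkHat_le_general k n t ht
end

section
/- Let k ≥ 1 be an integer, c ∈ ℝ, and let α be a real number with 0 < α < k(k+3)/2. For n ≥ 3 let t_c(k,n) := (((k/2+1)·log n + (k/2)·log log n + c)/n)^{1/(k+1)}, and for t ∈ [0,1] set μ(t) := (n−k)t^k and μ̲(t) := μ(t) − μ(t)^{3/5}. Then there exists n₀ ∈ ℕ such that for all n ≥ n₀, all integers m ≥ 1, and all t ∈ [t_c(k,n), 1]: if t < (α+1)·log(m)/m, then m < μ̲(t). -/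
/-!
Fix a small `ε > 0` and put `A = α + 1`. From `t m < A log m` one gets
`(1 - ε) log m < log A + log ε⁻¹ - log t`, and `t ≥ t_c` gives `-log t ≤ log n / (k + 1)`.
Hence `t m` is at most about `A / (k + 1) · log n`, which is below
`(1 - ε)² (k/2 + 1) log n ≤ (1 - ε)² n t^(k+1)` because `α < k(k+3)/2` means exactly
`A < (k + 1)(k/2 + 1)`. Dividing by `t`, `m < (1 - ε)² n t^k ≤ (1 - ε) μ`, and `μ ≥ log n` is so
large that `μ^(3/5) ≤ ε μ`, i.e. `(1 - ε) μ ≤ μ̲`.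
-/

open Real Filter Asymptotics

lemma rpow_le_mul_self_of_inv_rpow_le {a ε μ : ℝ} (hε : 0 < ε) (ha : a < 1)
    (hμ : ε⁻¹ ^ (1 - a)⁻¹ ≤ μ) : μ ^ a ≤ ε * μ := by
  have hμ0 : 0 < μ := (rpow_pos_of_pos (inv_pos.2 hε) _).trans_le hμ
  have h : ε⁻¹ ≤ μ ^ (1 - a) := by
    have := rpow_le_rpow (by positivity) hμ (sub_pos.2 ha).le
    rwa [← rpow_mul (inv_pos.2 hε).le, inv_mul_cancel₀ (sub_pos.2 ha).ne', rpow_one] at this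
  calc μ ^ a = ε * (ε⁻¹ * μ ^ a) := by field_simp
    _ ≤ ε * (μ ^ (1 - a) * μ ^ a) := by gcongr
    _ = ε * μ := by rw [← rpow_add hμ0, sub_add_cancel, rpow_one]

lemma log_le_mul_add_log_inv {ε y : ℝ} (hε : 0 < ε) (hy : 0 < y) :
    log y ≤ ε * y + log ε⁻¹ := by
  have := log_le_sub_one_of_pos (mul_pos hε hy)
  rw [log_mul hε.ne' hy.ne'] at this
  rw [log_inv]
  linarith

/-- The loss `ε` comes from bounding `log log m` by `ε log m + log ε⁻¹`. -/
lemma one_sub_mul_mul_lt_of_mul_lt_mul_log {A ε m t : ℝ} (hA : 0 < A) (hε : 0 < ε)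
    (hε1 : ε ≤ 1) (hm : 0 < m) (ht : 0 < t) (h : t * m < A * log m) :
    (1 - ε) * (t * m) < A * (log A + log ε⁻¹ - log t) := by
  have hlogm : 0 < log m := pos_of_mul_pos_right ((mul_pos ht hm).trans h) hA.le
  have hm' : m < A * log m / t := by rwa [lt_div_iff₀ ht, mul_comm]
  have hlog : log m < log A + log (log m) - log t := by
    have := log_lt_log hm hm'
    rwa [log_div (by positivity) ht.ne', log_mul hA.ne' hlogm.ne'] at this
  have hll := log_le_mul_add_log_inv hε hlogm
  calc (1 - ε) * (t * m) ≤ (1 - ε) * (A * log m) := mul_le_mul_of_nonneg_left h.le (by linarith)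
    _ = A * ((1 - ε) * log m) := by ring
    _ < A * (log A + log ε⁻¹ - log t) := by gcongr; linarith

lemma neg_log_le_of_one_le_mul_pow {n t : ℝ} {j : ℕ} (hn : 0 < n) (ht : 0 < t) (hj : 0 < j)
    (h : 1 ≤ n * t ^ j) : -log t ≤ log n / j := by
  have := log_nonneg h
  rw [log_mul hn.ne' (pow_pos ht j).ne', log_pow] at this
  rw [le_div_iff₀ (by exact_mod_cast hj)]
  linarith

lemma exists_le_one_sub_four_mul {A D : ℝ} (hA : 0 ≤ A) (hAD : A < D) :
    ∃ ε, 0 < ε ∧ ε ≤ 1 / 4 ∧ A ≤ (1 - 4 * ε) * D := by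
  have hD : 0 < D := hA.trans_lt hAD
  refine ⟨(1 - A / D) / 4, ?_, ?_, ?_⟩
  · have : A / D < 1 := (div_lt_one hD).2 hAD
    linarith
  · have : 0 ≤ A / D := div_nonneg hA hD.le
    linarith
  · rw [show 1 - 4 * ((1 - A / D) / 4) = A / D by ring, div_mul_cancel₀ A hD.ne']

noncomputable def tcNum (k : ℕ) (c r : ℝ) : ℝ :=
  ((k : ℝ) / 2 + 1) * log r + ((k : ℝ) / 2) * log (log r) + c

lemma tc_eq (k : ℕ) (c : ℝ) (n : ℕ) : tc k c n = (tcNum k c n / n) ^ ((1 : ℝ) / (k + 1)) := rfl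

lemma tc_mem_Ioo {k : ℕ} {c : ℝ} {n : ℕ} (h0 : 0 < tcNum k c n) (h1 : tcNum k c n < n) :
    tc k c n ∈ Set.Ioo 0 1 := by
  have hn : (0 : ℝ) < n := h0.trans h1
  rw [tc_eq]
  exact ⟨rpow_pos_of_pos (div_pos h0 hn) _,
    rpow_lt_one (div_pos h0 hn).le ((div_lt_one hn).2 h1) (by positivity)⟩

lemma tcNum_le_mul_pow_of_tc_le {k : ℕ} {c t : ℝ} {n : ℕ} (h0 : 0 ≤ tcNum k c n) (hn : 0 < n)
    (ht : tc k c n ≤ t) : tcNum k c n ≤ n * t ^ (k + 1) := by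
  have hpow : tc k c n ^ (k + 1) = tcNum k c n / n := by
    rw [tc_eq, show (1 : ℝ) / (k + 1) = ((k + 1 : ℕ) : ℝ)⁻¹ by push_cast; ring]
    exact rpow_inv_natCast_pow (by positivity) k.succ_ne_zero
  have := pow_le_pow_left₀ (by rw [tc_eq]; positivity) ht (k + 1)
  rwa [hpow, div_le_iff₀ (by exact_mod_cast hn), mul_comm] at this

lemma isLittleO_tcNum_id_atTop (k : ℕ) (c : ℝ) : tcNum k c =o[atTop] id := by
  have hlog := isLittleO_log_id_atTop
  have hloglog : (fun r => log (log r)) =o[atTop] id :=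
    (isLittleO_log_id_atTop.comp_tendsto tendsto_log_atTop).trans hlog
  exact ((hlog.const_mul_left _).add (hloglog.const_mul_left _)).add (isLittleO_const_id_atTop c)

lemma eventually_tcNum_bounds {k : ℕ} (hk : 0 < k) (c : ℝ) :
    ∀ᶠ n : ℕ in atTop, ((k : ℝ) / 2 + 1) * log n ≤ tcNum k c n ∧ tcNum k c n < n := by
  refine (tendsto_natCast_atTop_atTop (R := ℝ)).eventually (p := fun r : ℝ =>
    ((k : ℝ) / 2 + 1) * log r ≤ tcNum k c r ∧ tcNum k c r < r) ?_
  have hloglog : Tendsto (fun r => (k : ℝ) / 2 * log (log r)) atTop atTop :=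
    (tendsto_log_atTop.comp tendsto_log_atTop).const_mul_atTop (by positivity)
  filter_upwards [hloglog.eventually_ge_atTop (-c),
    (isLittleO_tcNum_id_atTop k c).bound (show (0 : ℝ) < 1 / 2 by norm_num),
    eventually_gt_atTop 0] with r hc hr hr0
  refine ⟨by unfold tcNum; linarith, ?_⟩
  rw [Real.norm_eq_abs, Real.norm_eq_abs, id, abs_of_pos hr0] at hr
  linarith [le_abs_self (tcNum k c r)]

lemma eventually_le_mul_log {b : ℝ} (hb : 0 < b) (C : ℝ) : ∀ᶠ n : ℕ in atTop, C ≤ b * log n :=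
  ((tendsto_log_atTop.comp tendsto_natCast_atTop_atTop).const_mul_atTop hb).eventually_ge_atTop C

lemma mul_lt_of_mul_lt_mul_log {A ε K n t m : ℝ} {j : ℕ} (hε : 0 < ε) (hε4 : ε ≤ 1 / 4)
    (hA : 0 < A) (hAK : A ≤ (1 - 4 * ε) * ((j + 1) * K)) (hK : 0 ≤ K) (hn : 1 ≤ n)
    (hB : A * (log A + log ε⁻¹) ≤ ε * K * log n) (ht : 0 < t) (hnt : 1 ≤ n * t ^ (j + 1))
    (hm : 0 < m) (h : t * m < A * log m) : t * m < (1 - ε) ^ 2 * K * log n := by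
  have hlogn : 0 ≤ log n := log_nonneg hn
  have hlogt := neg_log_le_of_one_le_mul_pow (by linarith) ht j.succ_pos hnt
  push_cast at hlogt
  have hAt : A * -log t ≤ (1 - 4 * ε) * K * log n := by
    calc A * -log t ≤ A * (log n / (j + 1)) := mul_le_mul_of_nonneg_left hlogt hA.le
      _ = A / (j + 1) * log n := by ring
      _ ≤ (1 - 4 * ε) * K * log n := by
        gcongr
        rw [div_le_iff₀ (by positivity)]
        linarith
  have hKx : 0 ≤ K * log n := mul_nonneg hK hlogn
  have hcube : (1 - 3 * ε) * (K * log n) ≤ (1 - ε) ^ 3 * (K * log n) := by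
    gcongr
    nlinarith [mul_nonneg (mul_nonneg hε.le hε.le) (by linarith : (0 : ℝ) ≤ 3 - ε)]
  have := one_sub_mul_mul_lt_of_mul_lt_mul_log hA hε (by linarith) hm ht h
  have hε1 : 0 < 1 - ε := by linarith
  refine lt_of_mul_lt_mul_left ?_ hε1.le
  linarith

lemma one_sub_sq_mul_le_mul_sub_rpow {a ε k N t L : ℝ} {j : ℕ} (hε : 0 < ε) (hε1 : ε < 1)
    (ha : a < 1) (ht : 0 < t) (ht1 : t ≤ 1) (hk : k ≤ ε * N) (hL : L ≤ N * t ^ (j + 1))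
    (hbig : ε⁻¹ ^ (1 - a)⁻¹ ≤ (1 - ε) * L) :
    (1 - ε) ^ 2 * L ≤ t * ((N - k) * t ^ j - ((N - k) * t ^ j) ^ a) := by
  set μ := (N - k) * t ^ j
  have hL0 : 0 < L :=
    pos_of_mul_pos_right ((rpow_pos_of_pos (inv_pos.2 hε) _).trans_le hbig) (by linarith)
  have hN : 0 < N := pos_of_mul_pos_left (hL0.trans_le hL) (by positivity)
  have hμ : (1 - ε) * (N * t ^ j) ≤ μ := by
    rw [← mul_assoc]
    exact mul_le_mul_of_nonneg_right (by linarith) (by positivity)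
  have hLμ : (1 - ε) * L ≤ μ := by
    refine le_trans (mul_le_mul_of_nonneg_left ?_ (by linarith)) hμ
    calc L ≤ N * t ^ (j + 1) := hL
      _ = N * t ^ j * t := by ring
      _ ≤ N * t ^ j := mul_le_of_le_one_right (by positivity) ht1
  have hμa := rpow_le_mul_self_of_inv_rpow_le hε ha (hbig.trans hLμ)
  calc (1 - ε) ^ 2 * L ≤ (1 - ε) ^ 2 * (N * t ^ (j + 1)) :=
        mul_le_mul_of_nonneg_left hL (by positivity)
    _ = t * ((1 - ε) * ((1 - ε) * (N * t ^ j))) := by ring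
    _ ≤ t * ((1 - ε) * μ) := by gcongr
    _ ≤ t * (μ - μ ^ a) := by gcongr; linarith

/-- Let `k ≥ 1`, `c ∈ ℝ`, `0 < α < k(k+3)/2`; set `μ(t) = (n−k)t^k` and
`μ̲(t) = μ(t) − μ(t)^{3/5}`. There is `n₀` such that for all `n ≥ n₀` (with
`t_c(k,n) ∈ (0,1)`), all integers `m ≥ 1` and all `t ∈ [t_c(k,n), 1]`:
if `t < (α+1)·log m / m` then `m < μ̲(t)`. -/
theorem exists_n0_q_alpha_m (k : ℕ) (hk : 1 ≤ k) (c : ℝ) (α : ℝ)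
    (hα0 : 0 < α) (hα : α < (k : ℝ) * ((k : ℝ) + 3) / 2) :
    ∃ n₀ : ℕ, ∀ n : ℕ, n₀ ≤ n →
      tc k c n ∈ Set.Ioo (0 : ℝ) 1 ∧
      ∀ m : ℕ, 1 ≤ m → ∀ t : ℝ, tc k c n ≤ t → t ≤ 1 →
        t < (α + 1) * Real.log m / m →
        (m : ℝ) < ((n : ℝ) - k) * t ^ k - (((n : ℝ) - k) * t ^ k) ^ ((3 : ℝ) / 5) := by
  have hK : (1 : ℝ) ≤ k / 2 + 1 := by linarith [(Nat.cast_nonneg k : (0 : ℝ) ≤ k)]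
  obtain ⟨ε, hε, hε4, hAε⟩ := exists_le_one_sub_four_mul (A := α + 1)
    (D := (k + 1) * ((k : ℝ) / 2 + 1)) (by linarith)
    (by linarith [show ((k : ℝ) + 1) * (k / 2 + 1) = k * (k + 3) / 2 + 1 by ring])
  obtain ⟨n₀, hn₀⟩ := eventually_atTop.mp <| (eventually_tcNum_bounds hk c).and <|
    (eventually_le_mul_log (b := 1) one_pos 1).and <|
    (eventually_le_mul_log (b := ε * (k / 2 + 1)) (by positivity)
      ((α + 1) * (log (α + 1) + log ε⁻¹))).and <|
    (eventually_le_mul_log (b := (1 - ε) * (k / 2 + 1)) (by nlinarith)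
      (ε⁻¹ ^ (1 - 3 / 5 : ℝ)⁻¹)).and <|
    (tendsto_natCast_atTop_atTop.const_mul_atTop hε).eventually_ge_atTop (k : ℝ)
  refine ⟨n₀, fun n hn => ?_⟩
  obtain ⟨⟨hKL, hLn⟩, hlog, hB, hbig, hkn⟩ := hn₀ n hn
  rw [one_mul] at hlog
  have hL1 : 1 ≤ tcNum k c n := by nlinarith
  have htc := tc_mem_Ioo (by linarith) hLn
  refine ⟨htc, fun m hm t htct ht1 hmt => ?_⟩
  have ht : 0 < t := htc.1.trans_le htct
  have hLt :=
    tcNum_le_mul_pow_of_tc_le (by linarith) ((Nat.cast_pos (α := ℝ)).1 (by linarith)) htct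
  have hm0 : (0 : ℝ) < m := by exact_mod_cast hm
  have hmt' := mul_lt_of_mul_lt_mul_log hε hε4 (by linarith) hAε (by linarith)
    (by linarith) hB ht (hL1.trans hLt) hm0 ((lt_div_iff₀ hm0).1 hmt)
  have hμ := one_sub_sq_mul_le_mul_sub_rpow (a := 3 / 5) hε (by linarith) (by norm_num) ht ht1
    hkn hLt (hbig.trans (by rw [mul_assoc]; gcongr; linarith))
  refine lt_of_mul_lt_mul_left (hmt'.trans_le (le_trans ?_ hμ)) ht.le
  rw [mul_assoc]
  gcongr
end
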